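/- arXiv:1710.11524 — 2 statements merged into one kernel-verified Lean document; each statement's English description precedes it below -/
import Mathlib

section
/- For every m ≥ 0 there is a constant C > 0 such that for all nonzero ξ, η ∈ ℝ³ and every sign θ ∈ {+1,−1}: (i) the operator norm of Π_θᵐ(ξ)·Π_{−θ}ᵐ(η) (as an operator on ℂ⁴) is at most C·(∠(ξ,η) + ⟨ξ⟩ₘ⁻¹ + ⟨η⟩ₘ⁻¹), and (ii) the operator norm of Π_θᵐ(ξ)·Π_θᵐ(η) is at most C·(∠(−ξ,η) + ⟨ξ⟩ₘ⁻¹ + ⟨η⟩ₘ⁻¹). -/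
noncomputable section
open Matrix Complex MeasureTheory

/-- ℝ³ with the Euclidean norm. -/
abbrev E3 := EuclideanSpace ℝ (Fin 3)

/-- The Dirac matrix β = [[I₂,0],[0,−I₂]]. -/
def diracBeta : Matrix (Fin 4) (Fin 4) ℂ :=
  !![1,0,0,0; 0,1,0,0; 0,0,-1,0; 0,0,0,-1]

/-- The Dirac matrices αʲ = [[0,σʲ],[σʲ,0]] built from the Pauli matrices. -/
def diracAlpha : Fin 3 → Matrix (Fin 4) (Fin 4) ℂ :=
  ![!![0,0,0,1; 0,0,1,0; 0,1,0,0; 1,0,0,0],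
    !![0,0,0,-Complex.I; 0,0,Complex.I,0; 0,-Complex.I,0,0; Complex.I,0,0,0],
    !![0,0,1,0; 0,0,0,-1; 1,0,0,0; 0,-1,0,0]]

/-- ξ·α = ξ₁α¹ + ξ₂α² + ξ₃α³. -/
def xiAlpha (ξ : E3) : Matrix (Fin 4) (Fin 4) ℂ := ∑ j, (ξ j : ℂ) • diracAlpha j

/-- The Dirac symbol ξ·α + mβ. -/
def diracSym (m : ℝ) (ξ : E3) : Matrix (Fin 4) (Fin 4) ℂ :=
  xiAlpha ξ + (m : ℂ) • diracBeta

/-- ⟨ξ⟩ₘ = (m² + |ξ|²)^(1/2). -/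
def bracket (m : ℝ) (ξ : E3) : ℝ := Real.sqrt (m ^ 2 + ‖ξ‖ ^ 2)

/-- The projection Π_θᵐ(ξ) = (1/2)[I₄ + θ⟨ξ⟩ₘ⁻¹(ξ·α + mβ)], for θ = ±1. -/
def proj (m θ : ℝ) (ξ : E3) : Matrix (Fin 4) (Fin 4) ℂ :=
  (1/2 : ℂ) • ((1 : Matrix (Fin 4) (Fin 4) ℂ)
    + ((θ : ℂ) * ((bracket m ξ : ℝ) : ℂ)⁻¹) • diracSym m ξ)

/-- The propagator symbol Uₘ(t,ξ) = cos(t⟨ξ⟩ₘ)·I₄ − i⟨ξ⟩ₘ⁻¹ sin(t⟨ξ⟩ₘ)·(ξ·α + mβ). -/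
def Uprop (m t : ℝ) (ξ : E3) : Matrix (Fin 4) (Fin 4) ℂ :=
  ((Real.cos (t * bracket m ξ) : ℝ) : ℂ) • (1 : Matrix (Fin 4) (Fin 4) ℂ) -
    (Complex.I * ((bracket m ξ : ℝ) : ℂ)⁻¹ * ((Real.sin (t * bracket m ξ) : ℝ) : ℂ))
      • diracSym m ξ

open scoped Matrix.Norms.L2Operator
open InnerProductGeometry

/-! Write Π_θᵐ(ξ) = ½(1 + A) with A = θ⟨ξ⟩ₘ⁻¹(ξ·α + mβ). The Clifford relations make every
Dirac symbol w·α + μβ self-adjoint with square (μ² + |w|²)·I₄, so its norm is (μ² + |w|²)^(1/2)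
and A is an involution of norm 1. Since (1 + A)A = 1 + A, the product Π_θᵐ(ξ)Π_θ'ᵐ(η) equals
¼(1 + A)(A + X), of norm at most ½‖A + X‖, and A + X is the Dirac symbol of
θξ/⟨ξ⟩ₘ + θ'η/⟨η⟩ₘ with mass m(θ/⟨ξ⟩ₘ + θ'/⟨η⟩ₘ). Writing θ'η = −θζ (ζ = η or −η), the
vector ξ/⟨ξ⟩ₘ − ζ/⟨ζ⟩ₘ differs from the difference of the unit vectors along ξ and ζ by at most
|m|(⟨ξ⟩ₘ⁻¹ + ⟨ζ⟩ₘ⁻¹), and a chord of the unit sphere is no longer than its arc ∠(ξ, ζ). -/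

section InnerProductSpace

variable {V : Type*} [NormedAddCommGroup V] [InnerProductSpace ℝ V]

lemma norm_sub_le_angle_of_norm_eq_one {u v : V} (hu : ‖u‖ = 1) (hv : ‖v‖ = 1) :
    ‖u - v‖ ≤ angle u v := by
  have hchord : ‖u - v‖ ^ 2 = 4 * Real.sin (angle u v / 2) ^ 2 := by
    have h := norm_sub_sq_eq_norm_sq_add_norm_sq_sub_two_mul_norm_mul_norm_mul_cos_angle u v
    have hhalf := Real.cos_sq (angle u v / 2)
    rw [mul_div_cancel₀ _ two_ne_zero] at hhalf
    rw [hu, hv] at h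
    nlinarith [Real.sin_sq_add_cos_sq (angle u v / 2)]
  have hsin : Real.sin (angle u v / 2) ^ 2 ≤ (angle u v / 2) ^ 2 := Real.sin_sq_le_sq
  refine (pow_le_pow_iff_left₀ (norm_nonneg _) (angle_nonneg u v) two_ne_zero).mp ?_
  linarith

lemma norm_inv_smul_sub_normalize {x : V} {a : ℝ} (hx : x ≠ 0) (ha : ‖x‖ ≤ a) :
    ‖a⁻¹ • x - NormedSpace.normalize x‖ = 1 - ‖x‖ / a := by
  have hx' : 0 < ‖x‖ := norm_pos_iff.mpr hx
  have ha' : 0 < a := hx'.trans_le ha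
  rw [NormedSpace.normalize, ← sub_smul, norm_smul, Real.norm_eq_abs,
    abs_of_nonpos (sub_nonpos.mpr (inv_anti₀ hx' ha))]
  field_simp
  ring

lemma angle_normalize_normalize {x y : V} (hx : x ≠ 0) (hy : y ≠ 0) :
    angle (NormedSpace.normalize x) (NormedSpace.normalize y) = angle x y := by
  rw [NormedSpace.normalize, NormedSpace.normalize,
    angle_smul_left_of_pos _ _ (inv_pos.mpr (norm_pos_iff.mpr hx)),
    angle_smul_right_of_pos _ _ (inv_pos.mpr (norm_pos_iff.mpr hy))]

lemma norm_inv_smul_sub_inv_smul_le {x y : V} {a b : ℝ} (hx : x ≠ 0) (hy : y ≠ 0)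
    (ha : ‖x‖ ≤ a) (hb : ‖y‖ ≤ b) :
    ‖a⁻¹ • x - b⁻¹ • y‖ ≤ angle x y + (1 - ‖x‖ / a) + (1 - ‖y‖ / b) := by
  have hchord : ‖NormedSpace.normalize x - NormedSpace.normalize y‖ ≤ angle x y := by
    rw [← angle_normalize_normalize hx hy]
    exact norm_sub_le_angle_of_norm_eq_one (NormedSpace.norm_normalize_eq_one_iff.mpr hx)
      (NormedSpace.norm_normalize_eq_one_iff.mpr hy)
  calc ‖a⁻¹ • x - b⁻¹ • y‖
      ≤ ‖a⁻¹ • x - NormedSpace.normalize x‖ + ‖NormedSpace.normalize x - NormedSpace.normalize y‖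
          + ‖NormedSpace.normalize y - b⁻¹ • y‖ :=
        (norm_sub_le_norm_sub_add_norm_sub _ (NormedSpace.normalize y) _).trans
          (by gcongr; exact norm_sub_le_norm_sub_add_norm_sub _ _ _)
    _ ≤ angle x y + (1 - ‖x‖ / a) + (1 - ‖y‖ / b) := by
        rw [norm_sub_rev (NormedSpace.normalize y), norm_inv_smul_sub_normalize hx ha,
          norm_inv_smul_sub_normalize hy hb]
        linarith

end InnerProductSpace

lemma norm_one_add_mul_one_add_le {R : Type*} [SeminormedRing R] {a : R} (b : R)
    (ha : a * a = 1) : ‖(1 + a) * (1 + b)‖ ≤ ‖1 + a‖ * ‖a + b‖ := by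
  have h : (1 + a) * a = 1 + a := by rw [add_mul, one_mul, ha, add_comm]
  calc ‖(1 + a) * (1 + b)‖ = ‖(1 + a) * (a + b)‖ := by
        rw [mul_add (1 + a) a, h, mul_add, mul_one]
    _ ≤ ‖1 + a‖ * ‖a + b‖ := norm_mul_le _ _


lemma diracSym_add (m m' : ℝ) (ξ ξ' : E3) :
    diracSym m ξ + diracSym m' ξ' = diracSym (m + m') (ξ + ξ') := by
  simp only [diracSym, xiAlpha, PiLp.add_apply, Complex.ofReal_add, add_smul,
    Finset.sum_add_distrib]
  abel

lemma ofReal_smul_diracSym (c m : ℝ) (ξ : E3) :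
    (c : ℂ) • diracSym m ξ = diracSym (c * m) (c • ξ) := by
  simp only [diracSym, xiAlpha, PiLp.smul_apply, smul_eq_mul, Complex.ofReal_mul, smul_add,
    Finset.smul_sum, smul_smul]

lemma diracSym_eq_matrix (m : ℝ) (ξ : E3) :
    diracSym m ξ =
      !![(m : ℂ), 0, (ξ 2 : ℂ), ξ 0 - I * ξ 1;
         0, (m : ℂ), ξ 0 + I * ξ 1, -(ξ 2 : ℂ);
         (ξ 2 : ℂ), ξ 0 - I * ξ 1, -(m : ℂ), 0;
         ξ 0 + I * ξ 1, -(ξ 2 : ℂ), 0, -(m : ℂ)] := by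
  ext i j
  fin_cases i <;> fin_cases j <;>
    simp [diracSym, xiAlpha, diracAlpha, diracBeta, Fin.sum_univ_three] <;> ring

lemma isHermitian_diracSym (m : ℝ) (ξ : E3) : (diracSym m ξ).IsHermitian := by
  rw [Matrix.IsHermitian, diracSym_eq_matrix]
  ext i j
  fin_cases i <;> fin_cases j <;> simp [Matrix.conjTranspose_apply] <;> ring

lemma bracket_sq (m : ℝ) (ξ : E3) : bracket m ξ ^ 2 = m ^ 2 + ‖ξ‖ ^ 2 :=
  Real.sq_sqrt (by positivity)

lemma diracSym_mul_self (m : ℝ) (ξ : E3) :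
    diracSym m ξ * diracSym m ξ = ((bracket m ξ ^ 2 : ℝ) : ℂ) • 1 := by
  have hξ : ‖ξ‖ ^ 2 = ξ 0 ^ 2 + ξ 1 ^ 2 + ξ 2 ^ 2 := by
    simp [EuclideanSpace.norm_sq_eq, Fin.sum_univ_three]
  rw [bracket_sq, hξ, diracSym_eq_matrix]
  ext i j
  fin_cases i <;> fin_cases j <;>
    simp [Matrix.mul_apply, Fin.sum_univ_four] <;> ring_nf <;> simp [Complex.I_sq]

lemma norm_diracSym (m : ℝ) (ξ : E3) : ‖diracSym m ξ‖ = bracket m ξ := by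
  have h := (isHermitian_diracSym m ξ).isSelfAdjoint.norm_pow_two_pow 1
  rw [pow_one, sq, diracSym_mul_self, norm_smul, CStarRing.norm_one, mul_one,
    Complex.norm_real, Real.norm_of_nonneg (sq_nonneg _)] at h
  exact (sq_eq_sq₀ (norm_nonneg _) (Real.sqrt_nonneg _)).mp h.symm

lemma bracket_smul (c m : ℝ) (ξ : E3) : bracket (c * m) (c • ξ) = |c| * bracket m ξ := by
  rw [bracket, bracket, norm_smul, Real.norm_eq_abs, mul_pow, mul_pow, sq_abs, ← mul_add,
    Real.sqrt_mul (sq_nonneg _), Real.sqrt_sq_eq_abs]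

lemma bracket_pos {ξ : E3} (m : ℝ) (hξ : ξ ≠ 0) : 0 < bracket m ξ :=
  Real.sqrt_pos.mpr (by positivity)

lemma norm_le_bracket (m : ℝ) (ξ : E3) : ‖ξ‖ ≤ bracket m ξ :=
  Real.le_sqrt_of_sq_le (le_add_of_nonneg_left (sq_nonneg m))

lemma bracket_le_abs_add_norm (m : ℝ) (ξ : E3) : bracket m ξ ≤ |m| + ‖ξ‖ := by
  rw [bracket, Real.sqrt_le_left (by positivity)]
  nlinarith [abs_nonneg m, norm_nonneg ξ, sq_abs m]

lemma one_sub_norm_div_bracket_le {ξ : E3} (m : ℝ) (hξ : ξ ≠ 0) :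
    1 - ‖ξ‖ / bracket m ξ ≤ |m| * (bracket m ξ)⁻¹ := by
  have ha := bracket_pos m hξ
  rw [one_sub_div ha.ne', ← div_eq_mul_inv, div_le_div_iff_of_pos_right ha]
  linarith [bracket_le_abs_add_norm m ξ]

lemma norm_inv_bracket_smul_sub_le {ξ η : E3} (m : ℝ) (hξ : ξ ≠ 0) (hη : η ≠ 0) :
    ‖(bracket m ξ)⁻¹ • ξ - (bracket m η)⁻¹ • η‖
      ≤ angle ξ η + |m| * ((bracket m ξ)⁻¹ + (bracket m η)⁻¹) := by
  have := norm_inv_smul_sub_inv_smul_le hξ hη (norm_le_bracket m ξ) (norm_le_bracket m η)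
  linarith [one_sub_norm_div_bracket_le m hξ, one_sub_norm_div_bracket_le m hη]

lemma proj_eq_half_one_add_diracSym (m θ : ℝ) (ξ : E3) :
    proj m θ ξ
      = (1 / 2 : ℂ) • (1 + diracSym (θ / bracket m ξ * m) ((θ / bracket m ξ) • ξ)) := by
  rw [← ofReal_smul_diracSym, proj]
  push_cast
  rfl

lemma bracket_div_bracket_smul_eq_one {θ : ℝ} (m : ℝ) {ξ : E3} (hθ : |θ| = 1) (hξ : ξ ≠ 0) :
    bracket (θ / bracket m ξ * m) ((θ / bracket m ξ) • ξ) = 1 := by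
  rw [bracket_smul, abs_div, hθ, abs_of_pos (bracket_pos m hξ), one_div_mul_cancel]
  exact (bracket_pos m hξ).ne'

lemma norm_proj_mul_proj_le {θ θ' m : ℝ} {ξ η : E3} (hθ : |θ| = 1) (hθ' : |θ'| = 1)
    (hξ : ξ ≠ 0) (hη : η ≠ 0) :
    ‖proj m θ ξ * proj m θ' η‖ ≤ (‖(θ / bracket m ξ) • ξ + (θ' / bracket m η) • η‖
      + |m| * ((bracket m ξ)⁻¹ + (bracket m η)⁻¹)) / 2 := by
  rw [proj_eq_half_one_add_diracSym, proj_eq_half_one_add_diracSym]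
  set a := bracket m ξ
  set b := bracket m η
  set A := diracSym (θ / a * m) ((θ / a) • ξ)
  have hAA : A * A = 1 := by
    rw [diracSym_mul_self, bracket_div_bracket_smul_eq_one m hθ hξ]
    simp
  have hA : ‖1 + A‖ ≤ 2 := by
    calc ‖1 + A‖ ≤ ‖(1 : Matrix (Fin 4) (Fin 4) ℂ)‖ + ‖A‖ := norm_add_le _ _
      _ = 2 := by
        rw [CStarRing.norm_one, norm_diracSym, bracket_div_bracket_smul_eq_one m hθ hξ]
        norm_num
  have hμ : |θ / a * m + θ' / b * m| ≤ |m| * (a⁻¹ + b⁻¹) := by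
    calc |θ / a * m + θ' / b * m| ≤ |θ / a * m| + |θ' / b * m| := abs_add_le _ _
      _ = |m| * (a⁻¹ + b⁻¹) := by
        rw [abs_mul, abs_mul, abs_div, abs_div, hθ, hθ', abs_of_pos (bracket_pos m hξ),
          abs_of_pos (bracket_pos m hη)]
        ring
  calc ‖(1 / 2 : ℂ) • (1 + A) * (1 / 2 : ℂ) • (1 + diracSym (θ' / b * m) ((θ' / b) • η))‖
      = 1 / 4 * ‖(1 + A) * (1 + diracSym (θ' / b * m) ((θ' / b) • η))‖ := by
        rw [smul_mul_smul_comm, norm_smul]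
        norm_num
    _ ≤ 1 / 4 * (2 * ‖A + diracSym (θ' / b * m) ((θ' / b) • η)‖) := by
        gcongr
        exact (norm_one_add_mul_one_add_le _ hAA).trans (by gcongr)
    _ = bracket (θ / a * m + θ' / b * m) ((θ / a) • ξ + (θ' / b) • η) / 2 := by
        rw [diracSym_add, norm_diracSym]
        ring
    _ ≤ (‖(θ / a) • ξ + (θ' / b) • η‖ + |m| * (a⁻¹ + b⁻¹)) / 2 := by
        linarith [bracket_le_abs_add_norm (θ / a * m + θ' / b * m) ((θ / a) • ξ + (θ' / b) • η)]

lemma norm_proj_mul_proj_le_angle {θ θ' m : ℝ} {ξ η ζ : E3} (hθ : |θ| = 1) (hθ' : |θ'| = 1)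
    (hζ : θ' • η = -θ • ζ) (hξ : ξ ≠ 0) (hη : η ≠ 0) :
    ‖proj m θ ξ * proj m θ' η‖
      ≤ (|m| + 1) * (angle ξ ζ + (bracket m ξ)⁻¹ + (bracket m η)⁻¹) := by
  have hnorm : ‖ζ‖ = ‖η‖ := by
    simpa [norm_smul, hθ, hθ'] using (congrArg norm hζ).symm
  have hζ0 : ζ ≠ 0 := norm_ne_zero_iff.mp (hnorm ▸ norm_ne_zero_iff.mpr hη)
  have hbracket : bracket m ζ = bracket m η := by rw [bracket, bracket, hnorm]
  have hw : (θ / bracket m ξ) • ξ + (θ' / bracket m η) • η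
      = θ • ((bracket m ξ)⁻¹ • ξ - (bracket m ζ)⁻¹ • ζ) := by
    simp only [div_eq_inv_mul, mul_smul, hζ, hbracket]
    module
  have hvec := norm_inv_bracket_smul_sub_le m hξ hζ0
  rw [hbracket] at hvec
  have hangle := angle_nonneg ξ ζ
  have hξ' := inv_pos.mpr (bracket_pos m hξ)
  have hη' := inv_pos.mpr (bracket_pos m hη)
  calc ‖proj m θ ξ * proj m θ' η‖
      ≤ (‖(θ / bracket m ξ) • ξ + (θ' / bracket m η) • η‖
          + |m| * ((bracket m ξ)⁻¹ + (bracket m η)⁻¹)) / 2 :=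
        norm_proj_mul_proj_le hθ hθ' hξ hη
    _ ≤ (angle ξ ζ + 2 * |m| * ((bracket m ξ)⁻¹ + (bracket m η)⁻¹)) / 2 := by
        rw [hw, norm_smul, Real.norm_eq_abs, hθ, one_mul, hbracket]
        linarith
    _ ≤ (|m| + 1) * (angle ξ ζ + (bracket m ξ)⁻¹ + (bracket m η)⁻¹) := by
        nlinarith [abs_nonneg m]

theorem proj_mul_proj_opNorm_bound_general (m : ℝ) :
    ∃ C > 0, ∀ θ : ℝ, (θ = 1 ∨ θ = -1) → ∀ ξ η : E3, ξ ≠ 0 → η ≠ 0 →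
      ‖Matrix.toEuclideanCLM (𝕜 := ℂ) (proj m θ ξ * proj m (-θ) η)‖
          ≤ C * (InnerProductGeometry.angle ξ η + (bracket m ξ)⁻¹ + (bracket m η)⁻¹) ∧
      ‖Matrix.toEuclideanCLM (𝕜 := ℂ) (proj m θ ξ * proj m θ η)‖
          ≤ C * (InnerProductGeometry.angle (-ξ) η + (bracket m ξ)⁻¹ + (bracket m η)⁻¹) := by
  refine ⟨|m| + 1, by positivity, fun θ hθ ξ η hξ hη => ?_⟩
  have hθ' : |θ| = 1 := by rcases hθ with rfl | rfl <;> simp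
  rw [← Matrix.cstar_norm_def, ← Matrix.cstar_norm_def, angle_neg_left, ← angle_neg_right]
  exact ⟨norm_proj_mul_proj_le_angle hθ' (by rwa [abs_neg]) rfl hξ hη,
    norm_proj_mul_proj_le_angle hθ' hθ' (by rw [neg_smul, smul_neg, neg_neg]) hξ hη⟩

/-- operator-norm bounds for products of the projections, in terms
of the angle between the frequencies and the inverse brackets. -/
theorem proj_mul_proj_opNorm_bound (m : ℝ) (hm : 0 ≤ m) :
    ∃ C > 0, ∀ θ : ℝ, (θ = 1 ∨ θ = -1) → ∀ ξ η : E3, ξ ≠ 0 → η ≠ 0 →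
      ‖Matrix.toEuclideanCLM (𝕜 := ℂ) (proj m θ ξ * proj m (-θ) η)‖
          ≤ C * (InnerProductGeometry.angle ξ η + (bracket m ξ)⁻¹ + (bracket m η)⁻¹) ∧
      ‖Matrix.toEuclideanCLM (𝕜 := ℂ) (proj m θ ξ * proj m θ η)‖
          ≤ C * (InnerProductGeometry.angle (-ξ) η + (bracket m ξ)⁻¹ + (bracket m η)⁻¹) :=
  proj_mul_proj_opNorm_bound_general m
end
end

section
/- (Geometric lower bound for the convolution integral in the ill-posedness argument.) There exists a constant c > 0 such that for every λ ≥ 1 and every ξ ∈ ℝ³ with λ ≤ |ξ| ≤ 2λ, ∫_{ℝ³} ∫_{ℝ³} (1 + |η|)⁻² · 𝟙_{W_λ}(η − σ) · 𝟙_{W_λ}(σ) · 𝟙_{W_λ}(ξ − η) dσ dη ≥ c · λ⁴, where W_λ = { x ∈ ℝ³ : λ ≤ |x| ≤ 2λ } and 𝟙_{W_λ} is its indicator function. -/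
noncomputable section
open Matrix Complex MeasureTheory

/-- The indicator function of the annulus W_λ = {x : λ ≤ |x| ≤ 2λ}. -/
def annulusInd (lam : ℝ) (y : E3) : ℝ :=
  Set.indicator {x : E3 | lam ≤ ‖x‖ ∧ ‖x‖ ≤ 2 * lam} (fun _ => (1 : ℝ)) y

/-!
Write `ξ = t u` with `|u| = 1`. On the axis through `ξ` take `η₀ = (t - 3λ/2) u` and
`σ₀ = (t/2 - 9λ/4) u`: then `|ξ - η₀| = 3λ/2`, `|η₀ - σ₀|` and `|σ₀|` lie in `[5λ/4, 7λ/4]`,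
and `|η₀| ≤ λ/2`. These margins survive moving `η` and `σ` within the balls of radius `λ/16`
around `η₀` and `σ₀`, where therefore all three indicators equal `1` and the weight is at least
`(2λ)⁻²`. Hence the double integral is at least `(2λ)⁻² ((4π/3)(λ/16)³)²`, of order `λ⁴`.
-/

open Metric Set
open scoped ENNReal

theorem norm_mem_Icc_of_norm_sub_le {E : Type*} [SeminormedAddCommGroup E] {x y : E}
    {a b r : ℝ} (hxy : ‖x - y‖ ≤ r) (hy : ‖y‖ ∈ Icc (a + r) (b - r)) : ‖x‖ ∈ Icc a b := by
  have := abs_le.mp ((abs_norm_sub_norm_le x y).trans hxy)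
  constructor <;> linarith [hy.1, hy.2]

theorem le_integral_integral_of_le_on_prod {α β : Type*} [MeasurableSpace α]
    [MeasurableSpace β] {μ : Measure α} {ν : Measure β} [SFinite μ] [SFinite ν]
    {f : α → β → ℝ} (hf : Integrable (Function.uncurry f) (μ.prod ν)) (hf₀ : ∀ x y, 0 ≤ f x y)
    {s : Set α} {t : Set β} (hs : MeasurableSet s) (ht : MeasurableSet t)
    (hμs : μ s ≠ ∞) (hνt : ν t ≠ ∞) {c : ℝ} (hc : ∀ x ∈ s, ∀ y ∈ t, c ≤ f x y) :
    c * μ.real s * ν.real t ≤ ∫ x, ∫ y, f x y ∂ν ∂μ := by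
  rw [integral_integral hf]
  calc c * μ.real s * ν.real t = c * (μ.prod ν).real (s ×ˢ t) := by
        rw [measureReal_prod_prod, mul_assoc]
    _ ≤ ∫ z in s ×ˢ t, f z.1 z.2 ∂μ.prod ν :=
        setIntegral_ge_of_const_le_real (hs.prod ht)
          (by rw [Measure.prod_prod]; exact ENNReal.mul_ne_top hμs hνt)
          (fun z hz => hc _ hz.1 _ hz.2) hf.integrableOn
    _ ≤ ∫ z, f z.1 z.2 ∂μ.prod ν :=
        setIntegral_le_integral hf (ae_of_all _ fun z => hf₀ _ _)

def annulus {E : Type*} [Norm E] (lam : ℝ) : Set E := norm ⁻¹' Icc lam (2 * lam)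

theorem measurableSet_annulus {E : Type*} [SeminormedAddCommGroup E] [MeasurableSpace E]
    [OpensMeasurableSpace E] (lam : ℝ) : MeasurableSet (annulus lam : Set E) :=
  (isClosed_Icc.preimage continuous_norm).measurableSet

theorem isBounded_annulus {E : Type*} [SeminormedAddCommGroup E] (lam : ℝ) :
    Bornology.IsBounded (annulus lam : Set E) :=
  isBounded_closedBall.subset fun _ hx => mem_closedBall_zero_iff.mpr hx.2

theorem exists_balls_annulus_decomposition {E : Type*} [NormedAddCommGroup E]
    [NormedSpace ℝ E] {lam : ℝ} (hlam : 0 < lam) {ξ : E} (hξ : ξ ∈ annulus lam) :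
    ∃ η₀ σ₀ : E, ∀ η ∈ ball η₀ (lam / 16), ∀ σ ∈ ball σ₀ (lam / 16),
      ‖η‖ ≤ lam ∧ η - σ ∈ annulus lam ∧ σ ∈ annulus lam ∧ ξ - η ∈ annulus lam := by
  obtain ⟨hξ₁, hξ₂⟩ : lam ≤ ‖ξ‖ ∧ ‖ξ‖ ≤ 2 * lam := hξ
  set t := ‖ξ‖
  have ht : t ≠ 0 := (hlam.trans_le hξ₁).ne'
  set u := t⁻¹ • ξ
  have hξu : ξ = t • u := (smul_inv_smul₀ ht ξ).symm
  have hnorm : ∀ r : ℝ, ‖r • u‖ = |r| := fun r => by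
    rw [norm_smul, norm_smul, norm_inv, norm_norm, inv_mul_cancel₀ ht, Real.norm_eq_abs, mul_one]
  set η₀ := (t - 3 / 2 * lam) • u
  set σ₀ := (t / 2 - 9 / 4 * lam) • u
  refine ⟨η₀, σ₀, fun η hη σ hσ => ?_⟩
  rw [mem_ball, dist_eq_norm] at hη hσ
  refine ⟨?_, ?_, ?_, ?_⟩
  · have hη₀ : ‖η₀‖ ≤ lam / 2 := by
      rw [hnorm, abs_le]; constructor <;> linarith
    linarith [norm_le_norm_add_norm_sub' η η₀]
  · refine norm_mem_Icc_of_norm_sub_le (y := η₀ - σ₀) (r := lam / 8) ?_ ?_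
    · rw [sub_sub_sub_comm]
      linarith [norm_sub_le (η - η₀) (σ - σ₀)]
    · rw [← sub_smul, hnorm, abs_of_pos (by linarith)]; constructor <;> linarith
  · refine norm_mem_Icc_of_norm_sub_le hσ.le ?_
    rw [hnorm, abs_of_neg (by linarith)]; constructor <;> linarith
  · refine norm_mem_Icc_of_norm_sub_le (y := ξ - η₀) (r := lam / 16) ?_ ?_
    · rw [sub_sub_sub_cancel_left, norm_sub_rev]
      exact hη.le
    · rw [hξu, ← sub_smul, hnorm, abs_of_pos (by linarith)]; constructor <;> linarith

theorem annulusInd_of_mem {lam : ℝ} {x : E3} (hx : x ∈ annulus lam) : annulusInd lam x = 1 :=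
  indicator_of_mem hx _

theorem annulusInd_nonneg (lam : ℝ) (x : E3) : 0 ≤ annulusInd lam x :=
  indicator_nonneg (fun _ _ => zero_le_one) x

theorem norm_annulusInd_le_one (lam : ℝ) (x : E3) : ‖annulusInd lam x‖ ≤ 1 :=
  (norm_indicator_le_norm_self _ x).trans norm_one.le

@[fun_prop]
theorem measurable_annulusInd (lam : ℝ) : Measurable (annulusInd lam) :=
  measurable_const.indicator (measurableSet_annulus lam)

theorem integrable_annulusInd (lam : ℝ) : Integrable (annulusInd lam) :=
  (integrable_indicator_iff (measurableSet_annulus lam)).mpr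
    (integrableOn_const (isBounded_annulus lam).measure_lt_top.ne)

theorem norm_inv_one_add_norm_sq_le_one {E : Type*} [SeminormedAddCommGroup E] (η : E) :
    ‖((1 + ‖η‖) ^ 2)⁻¹‖ ≤ 1 := by
  rw [Real.norm_of_nonneg (by positivity)]
  exact inv_le_one_of_one_le₀ (one_le_pow₀ (le_add_of_nonneg_right (norm_nonneg η)))

theorem integrable_convolution_integrand (lam : ℝ) (ξ : E3) :
    Integrable (fun p : E3 × E3 => ((1 + ‖p.1‖) ^ 2)⁻¹ * annulusInd lam (p.1 - p.2)
      * annulusInd lam p.2 * annulusInd lam (ξ - p.1)) (volume.prod volume) := by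
  have hsupport : Integrable (fun p : E3 × E3 => annulusInd lam (ξ - p.1) * annulusInd lam p.2)
      (volume.prod volume) :=
    ((integrable_annulusInd lam).comp_sub_left ξ).mul_prod (integrable_annulusInd lam)
  refine (hsupport.bdd_mul (c := 1)
    (f := fun p : E3 × E3 => ((1 + ‖p.1‖) ^ 2)⁻¹ * annulusInd lam (p.1 - p.2))
    (by fun_prop) (ae_of_all _ fun p => ?_)).congr (ae_of_all _ fun p => by ring)
  rw [norm_mul]
  exact mul_le_one₀ (norm_inv_one_add_norm_sq_le_one _) (norm_nonneg _)
    (norm_annulusInd_le_one _ _)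

/-- geometric lower bound c·λ⁴ for the convolution integral in the
ill-posedness argument. -/
theorem convolution_integral_lower_bound :
    ∃ c > (0 : ℝ), ∀ lam : ℝ, 1 ≤ lam → ∀ ξ : E3, lam ≤ ‖ξ‖ → ‖ξ‖ ≤ 2 * lam →
      c * lam ^ 4 ≤ ∫ η : E3, ∫ σ : E3,
        ((1 + ‖η‖) ^ 2)⁻¹ * annulusInd lam (η - σ) * annulusInd lam σ
          * annulusInd lam (ξ - η) := by
  refine ⟨(Real.pi * 4 / 3) ^ 2 / (4 * 16 ^ 6), by positivity, fun lam hlam ξ hξ₁ hξ₂ => ?_⟩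
  have hlam₀ : 0 < lam := by linarith
  obtain ⟨η₀, σ₀, hballs⟩ :=
    exists_balls_annulus_decomposition hlam₀ (show ξ ∈ annulus lam from ⟨hξ₁, hξ₂⟩)
  have hvol : ∀ x : E3, volume.real (ball x (lam / 16)) = (lam / 16) ^ 3 * (Real.pi * 4 / 3) :=
    fun x => by
      rw [measureReal_def, EuclideanSpace.volume_ball_fin_three, ENNReal.toReal_mul,
        ENNReal.toReal_pow, ENNReal.toReal_ofReal (by positivity),
        ENNReal.toReal_ofReal (by positivity)]
  calc (Real.pi * 4 / 3) ^ 2 / (4 * 16 ^ 6) * lam ^ 4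
      = ((2 * lam) ^ 2)⁻¹ * volume.real (ball η₀ (lam / 16))
          * volume.real (ball σ₀ (lam / 16)) := by
        rw [hvol, hvol]; field_simp; ring
    _ ≤ _ := le_integral_integral_of_le_on_prod (integrable_convolution_integrand lam ξ)
        (fun η σ => mul_nonneg (mul_nonneg (mul_nonneg (by positivity) (annulusInd_nonneg _ _))
          (annulusInd_nonneg _ _)) (annulusInd_nonneg _ _))
        measurableSet_ball measurableSet_ball measure_ball_lt_top.ne measure_ball_lt_top.ne
        fun η hη σ hσ => ?_
  obtain ⟨hη, hησ, hσ, hξη⟩ := hballs η hη σ hσ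
  rw [annulusInd_of_mem hησ, annulusInd_of_mem hσ, annulusInd_of_mem hξη, mul_one, mul_one,
    mul_one]
  gcongr
  linarith
end
end
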